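/- arXiv:2604.24939 — 2 statements merged into one kernel-verified Lean document; each statement's English description precedes it below -/
import Mathlib

section
/- Let F, A ∈ ℝ^{n×n} have disjoint spectra, H ∈ ℝ^{1×n}, B ∈ ℝ^{n×1}, and let T be the unique solution of T F = A T + B H. If the pair (F, H) is observable and the pair (A, B) is controllable, then T is invertible. -/
open Matrix

/-- Observability matrix of `(F, H)` for single-output `H`. -/
def obsMat1 {n : ℕ} (F : Matrix (Fin n) (Fin n) ℝ) (H : Matrix (Fin 1) (Fin n) ℝ) :
    Matrix (Fin n) (Fin n) ℝ :=
  fun k j => (H * F ^ (k : ℕ)) 0 j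

/-- Controllability matrix of `(A, B)` for single-input `B`. -/
def ctrbMat1 {n : ℕ} (A : Matrix (Fin n) (Fin n) ℝ) (B : Matrix (Fin n) (Fin 1) ℝ) :
    Matrix (Fin n) (Fin n) ℝ :=
  fun i k => (A ^ (k : ℕ) * B) i 0

lemma sylv_reindexAux {n : ℕ} {M : Type*} [AddCommMonoid M] [Module ℝ M]
    (q : Polynomial ℝ) (hq : q.natDegree = n) (G : ℕ → ℕ → M) :
    ∑ k ∈ Finset.range (n+1), ∑ p ∈ Finset.range k, q.coeff k • G (k-1-p) p
    = ∑ a ∈ Finset.range n, ∑ b ∈ Finset.range n, q.coeff (a+b+1) • G a b := by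
  rw [Finset.sum_sigma', Finset.sum_sigma']
  rw [show (∑ x ∈ (Finset.range n).sigma fun _ => Finset.range n,
        q.coeff (x.1 + x.2 + 1) • G x.1 x.2)
      = ∑ x ∈ ((Finset.range n).sigma fun _ => Finset.range n).filter
          (fun y => y.1 + y.2 + 1 ≤ n), q.coeff (x.1 + x.2 + 1) • G x.1 x.2 by
    refine (Finset.sum_subset (Finset.filter_subset _ _) ?_).symm
    intro x _ hx
    simp only [Finset.mem_filter, not_and, not_le] at hx
    have : q.coeff (x.1 + x.2 + 1) = 0 := by
      apply Polynomial.coeff_eq_zero_of_natDegree_lt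
      simp only [Finset.mem_sigma, Finset.mem_range] at *
      omega
    rw [this, zero_smul]]
  refine Finset.sum_nbij' (fun x => ⟨x.1 - 1 - x.2, x.2⟩) (fun y => ⟨y.1 + y.2 + 1, y.2⟩)
    ?_ ?_ ?_ ?_ ?_
  · rintro ⟨k, p⟩ hx
    simp only [Finset.mem_sigma, Finset.mem_range, Finset.mem_filter] at *
    omega
  · rintro ⟨a, b⟩ hy
    simp only [Finset.mem_sigma, Finset.mem_range, Finset.mem_filter] at *
    omega
  · rintro ⟨k, p⟩ hx
    simp only [Finset.mem_sigma, Finset.mem_range] at hx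
    simp only [Sigma.mk.inj_iff]
    exact ⟨by omega, HEq.rfl⟩
  · rintro ⟨a, b⟩ hy
    simp only [Finset.mem_filter, Finset.mem_sigma, Finset.mem_range] at hy
    simp only [Sigma.mk.inj_iff]
    exact ⟨by omega, HEq.rfl⟩
  · rintro ⟨k, p⟩ hx
    simp only [Finset.mem_sigma, Finset.mem_range] at hx
    have : k - 1 - p + p + 1 = k := by omega
    rw [this]

lemma sylv_XdetAux {n : ℕ} (q : Polynomial ℝ) (hmonic : q.Monic) (hq : q.natDegree = n) :
    IsUnit (Matrix.det (Matrix.of (fun a b : Fin n => q.coeff (a + b + 1)))) := by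
  set Y : Matrix (Fin n) (Fin n) ℝ :=
    Matrix.of (fun a b : Fin n => q.coeff ((Fin.rev a : ℕ) + b + 1)) with hY
  have hXY : Matrix.of (fun a b : Fin n => q.coeff ((a:ℕ) + b + 1))
      = Y.submatrix Fin.revPerm id := by
    ext a b
    simp only [hY, Matrix.of_apply, Matrix.submatrix_apply, Fin.revPerm_apply, id, Fin.val_rev]
    have := a.is_lt
    congr 1
    omega
  have hdiag : ∀ i : Fin n, Y i i = 1 := by
    intro i
    have h1 : ((Fin.rev i : ℕ) + i + 1) = n := by
      have := i.is_lt
      have := Fin.val_rev i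
      omega
    simp only [hY, Matrix.of_apply, h1]
    rw [← hq]
    exact hmonic.coeff_natDegree
  have htri : Y.BlockTriangular OrderDual.toDual := by
    intro i j hij
    have hij' : (i : ℕ) < j := hij
    have := i.is_lt
    have hv := Fin.val_rev i
    simp only [hY, Matrix.of_apply]
    apply Polynomial.coeff_eq_zero_of_natDegree_lt
    omega
  have hdetY : Y.det = 1 := by
    rw [Matrix.det_of_lowerTriangular Y htri]
    simp [hdiag]
  rw [hXY, Matrix.det_permute, hdetY, mul_one]
  rcases Int.units_eq_one_or (Equiv.Perm.sign (Fin.revPerm : Equiv.Perm (Fin n))) with h | h <;>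
    simp [h]

theorem sylvester_solution_invertible {n : ℕ}
    (F A : Matrix (Fin n) (Fin n) ℝ)
    (hspec : spectrum ℂ (A.map (Complex.ofReal ·)) ∩ spectrum ℂ (F.map (Complex.ofReal ·)) = ∅)
    (H : Matrix (Fin 1) (Fin n) ℝ) (B : Matrix (Fin n) (Fin 1) ℝ)
    (T : Matrix (Fin n) (Fin n) ℝ) (hT : T * F = A * T + B * H)
    (hobs : IsUnit (obsMat1 F H).det)
    (hctrb : IsUnit (ctrbMat1 A B).det) :
    IsUnit T.det := by
  classical
  set q := F.charpoly with hqdef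
  have hmonic : q.Monic := F.charpoly_monic
  have hdeg : q.natDegree = n := by
    rw [hqdef, Matrix.charpoly_natDegree_eq_dim, Fintype.card_fin]
  -- Step A
  have hstep : ∀ k : ℕ, T * F ^ k = A ^ k * T +
      ∑ p ∈ Finset.range k, A ^ (k - 1 - p) * (B * H) * F ^ p := by
    intro k
    induction k with
    | zero => simp
    | succ k ih =>
      have h1 : ∑ p ∈ Finset.range (k + 1), A ^ (k + 1 - 1 - p) * (B * H) * F ^ p
          = (∑ p ∈ Finset.range k, A ^ (k - 1 - p) * (B * H) * F ^ p) * F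
            + A ^ k * (B * H) := by
        rw [Finset.sum_range_succ', Finset.sum_mul]
        congr 1
        · apply Finset.sum_congr rfl
          intro p _
          have : k + 1 - 1 - (p + 1) = k - 1 - p := by omega
          rw [this, pow_succ, ← mul_assoc]
        · simp
      rw [pow_succ, ← mul_assoc, ih, add_mul, h1, mul_assoc, hT, mul_add, ← mul_assoc,
        ← pow_succ]
      abel
  -- Step B
  have hexp : ∀ M : Matrix (Fin n) (Fin n) ℝ,
      Polynomial.aeval M q = ∑ k ∈ Finset.range (n+1), q.coeff k • M ^ k := by
    intro M
    rw [Polynomial.aeval_eq_sum_range, hdeg]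
  have key : Polynomial.aeval A q * T
      = - ∑ k ∈ Finset.range (n+1), ∑ p ∈ Finset.range k,
          q.coeff k • (A ^ (k-1-p) * (B * H) * F ^ p) := by
    have h0 : T * Polynomial.aeval F q = 0 := by
      rw [Matrix.aeval_self_charpoly, mul_zero]
    rw [hexp F, Finset.mul_sum] at h0
    simp only [mul_smul_comm, hstep, smul_add, Finset.sum_add_distrib, Finset.smul_sum] at h0
    have h1 : ∑ k ∈ Finset.range (n+1), q.coeff k • (A ^ k * T)
        = Polynomial.aeval A q * T := by
      rw [hexp A, Finset.sum_mul]
      simp [smul_mul_assoc]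
    rw [h1] at h0
    exact eq_neg_of_add_eq_zero_left h0
  -- Step C : product decomposition
  set Xm : Matrix (Fin n) (Fin n) ℝ :=
    Matrix.of (fun a b : Fin n => q.coeff ((a:ℕ) + b + 1)) with hXm
  have hentry : ∀ (a b : ℕ) (i j : Fin n),
      (A ^ a * (B * H) * F ^ b) i j = (A ^ a * B) i 0 * (H * F ^ b) 0 j := by
    intro a b i j
    have : A ^ a * (B * H) * F ^ b = (A ^ a * B) * (H * F ^ b) := by
      rw [mul_assoc, Matrix.mul_assoc B H (F ^ b), ← Matrix.mul_assoc (A ^ a) B (H * F ^ b)]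
    rw [this, Matrix.mul_apply, Fin.sum_univ_one]
  have hsq : ∀ g : ℕ → ℕ → ℝ,
      ∑ a ∈ Finset.range n, ∑ b ∈ Finset.range n, g a b
        = ∑ a : Fin n, ∑ b : Fin n, g a b := by
    intro g
    rw [← Fin.sum_univ_eq_sum_range]
    exact Finset.sum_congr rfl fun a _ => (Fin.sum_univ_eq_sum_range _ _).symm
  have hprod : ctrbMat1 A B * Xm * obsMat1 F H
      = ∑ k ∈ Finset.range (n+1), ∑ p ∈ Finset.range k,
          q.coeff k • (A ^ (k-1-p) * (B * H) * F ^ p) := by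
    refine Eq.trans ?_ (sylv_reindexAux q hdeg fun a b => A ^ a * (B * H) * F ^ b).symm
    ext i j
    have lhs_eq : (ctrbMat1 A B * Xm * obsMat1 F H) i j
        = ∑ b : Fin n, ∑ a : Fin n,
            q.coeff ((a:ℕ)+b+1) * ((A^(a:ℕ)*B) i 0 * (H*F^(b:ℕ)) 0 j) := by
      rw [Matrix.mul_apply]
      refine Finset.sum_congr rfl fun b _ => ?_
      rw [Matrix.mul_apply, Finset.sum_mul]
      refine Finset.sum_congr rfl fun a _ => ?_
      simp only [ctrbMat1, obsMat1, hXm, Matrix.of_apply]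
      ring
    have rhs_eq : (∑ a ∈ Finset.range n, ∑ b ∈ Finset.range n,
          q.coeff (a+b+1) • (A^a*(B*H)*F^b)) i j
        = ∑ a ∈ Finset.range n, ∑ b ∈ Finset.range n,
            q.coeff (a+b+1) * ((A^a*B) i 0 * (H*F^b) 0 j) := by
      simp only [Matrix.sum_apply, Matrix.smul_apply, smul_eq_mul, hentry]
    rw [lhs_eq, rhs_eq,
      hsq fun a b => q.coeff (a+b+1) * ((A^a*B) i 0 * (H*F^b) 0 j), Finset.sum_comm]
  -- Final assembly
  have heq : Polynomial.aeval A q * T = -(ctrbMat1 A B * Xm * obsMat1 F H) := by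
    rw [hprod, key]
  have hdet : (Polynomial.aeval A q).det * T.det
      = (-(ctrbMat1 A B * Xm * obsMat1 F H)).det := by
    rw [← Matrix.det_mul, heq]
  have hrhs : IsUnit (-(ctrbMat1 A B * Xm * obsMat1 F H)).det := by
    rw [Matrix.det_neg, Matrix.det_mul, Matrix.det_mul, Fintype.card_fin]
    exact ((isUnit_one.neg.pow n).mul ((hctrb.mul (sylv_XdetAux q hmonic hdeg)).mul hobs))
  rw [← hdet] at hrhs
  exact isUnit_of_mul_isUnit_right hrhs
end

section
/- Consider the discrete-time system x(k+1) = F x(k) + u(k) + D d(k), y(k) = H x(k) + W w(k), and suppose T is invertible with T F = A T + B H where A is entrywise nonnegative. Define e̅(k) = T x̂̅(k) − T x(k) and e̲(k) = T x(k) − T x̲̂(k), where the observer bounds satisfy the dynamics x̂̅(k+1) = F x̂̅(k) + u(k) + T⁻¹B (y(k) − H x̂̅(k)) + T⁻¹((TD)⁺ d̅(k) − (TD)⁻ d̲(k)) + T⁻¹((BW)⁻ w̅(k) − (BW)⁺ w̲(k)) and symmetrically for x̲̂. If d̲(k) ≤ d(k) ≤ d̅(k), w̲(k) ≤ w(k)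 ≤ w̅(k) for all k, and e̅(0) ≥ 0, e̲(0) ≥ 0, then e̅(k) ≥ 0 and e̲(k) ≥ 0 for all k; i.e., x̂ errors in the T-coordinates remain componentwise nonnegative, so T x̲̂(k) ≤ T x(k) ≤ T x̂̅(k) for all k. -/
open Matrix

def matPos {m n : ℕ} (A : Matrix (Fin m) (Fin n) ℝ) : Matrix (Fin m) (Fin n) ℝ :=
  fun i j => max 0 (A i j)

def matNeg {m n : ℕ} (A : Matrix (Fin m) (Fin n) ℝ) : Matrix (Fin m) (Fin n) ℝ :=
  matPos A - A


lemma mulVec_entry_nonneg {m n : ℕ} (M : Matrix (Fin m) (Fin n) ℝ) (v : Fin n → ℝ)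
    (hM : ∀ i j, 0 ≤ M i j) (hv : ∀ j, 0 ≤ v j) (i : Fin m) : 0 ≤ (M *ᵥ v) i := by
  simp only [Matrix.mulVec, dotProduct]
  exact Finset.sum_nonneg fun j _ => mul_nonneg (hM i j) (hv j)

lemma matPos_nonneg {m n : ℕ} (M : Matrix (Fin m) (Fin n) ℝ) (i j) : 0 ≤ matPos M i j :=
  le_max_left 0 _

lemma matNeg_nonneg {m n : ℕ} (M : Matrix (Fin m) (Fin n) ℝ) (i j) : 0 ≤ matNeg M i j := by
  simp [matNeg, matPos]

lemma matPos_sub_matNeg {m n : ℕ} (M : Matrix (Fin m) (Fin n) ℝ) :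
    matPos M - matNeg M = M := by
  simp [matNeg]

theorem sylvester_interval_observer_nonneg_errors {n p q r : ℕ}
    (F : Matrix (Fin n) (Fin n) ℝ) (H : Matrix (Fin p) (Fin n) ℝ)
    (D : Matrix (Fin n) (Fin q) ℝ) (W : Matrix (Fin p) (Fin r) ℝ)
    (T A : Matrix (Fin n) (Fin n) ℝ) (B : Matrix (Fin n) (Fin p) ℝ)
    (hTinv : IsUnit T.det)
    (hSyl : T * F = A * T + B * H)
    (hA : ∀ i j, 0 ≤ A i j)
    (x xhatU xhatL : ℕ → Fin n → ℝ) (u : ℕ → Fin n → ℝ)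
    (d dU dL : ℕ → Fin q → ℝ) (w wU wL : ℕ → Fin r → ℝ)
    (y : ℕ → Fin p → ℝ)
    -- system dynamics and output
    (hsys : ∀ k, x (k + 1) = F *ᵥ x k + u k + D *ᵥ d k)
    (hout : ∀ k, y k = H *ᵥ x k + W *ᵥ w k)
    -- uncertainty bounds
    (hd : ∀ k i, dL k i ≤ d k i ∧ d k i ≤ dU k i)
    (hw : ∀ k i, wL k i ≤ w k i ∧ w k i ≤ wU k i)
    -- upper observer dynamics
    (hobsU : ∀ k, xhatU (k + 1) =
      F *ᵥ xhatU k + u k + T⁻¹ *ᵥ (B *ᵥ (y k - H *ᵥ xhatU k))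
        + T⁻¹ *ᵥ (matPos (T * D) *ᵥ dU k - matNeg (T * D) *ᵥ dL k)
        + T⁻¹ *ᵥ (matNeg (B * W) *ᵥ wU k - matPos (B * W) *ᵥ wL k))
    -- lower observer dynamics
    (hobsL : ∀ k, xhatL (k + 1) =
      F *ᵥ xhatL k + u k + T⁻¹ *ᵥ (B *ᵥ (y k - H *ᵥ xhatL k))
        + T⁻¹ *ᵥ (matPos (T * D) *ᵥ dL k - matNeg (T * D) *ᵥ dU k)
        + T⁻¹ *ᵥ (matNeg (B * W) *ᵥ wL k - matPos (B * W) *ᵥ wU k))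
    -- nonnegative initial errors in the T-coordinates
    (hU0 : ∀ i, 0 ≤ (T *ᵥ xhatU 0 - T *ᵥ x 0) i)
    (hL0 : ∀ i, 0 ≤ (T *ᵥ x 0 - T *ᵥ xhatL 0) i) :
    ∀ k i, 0 ≤ (T *ᵥ xhatU k - T *ᵥ x k) i ∧ 0 ≤ (T *ᵥ x k - T *ᵥ xhatL k) i := by
  have hTT : T * T⁻¹ = 1 := Matrix.mul_nonsing_inv T hTinv
  have hcan : ∀ v : Fin n → ℝ, T *ᵥ (T⁻¹ *ᵥ v) = v := fun v => by
    rw [Matrix.mulVec_mulVec, hTT, Matrix.one_mulVec]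
  have hTF : ∀ z : Fin n → ℝ, T *ᵥ (F *ᵥ z) = A *ᵥ (T *ᵥ z) + B *ᵥ (H *ᵥ z) := fun z => by
    rw [Matrix.mulVec_mulVec, hSyl, Matrix.add_mulVec, ← Matrix.mulVec_mulVec,
      ← Matrix.mulVec_mulVec]
  have hTDs : ∀ v : Fin q → ℝ, T *ᵥ (D *ᵥ v) = matPos (T * D) *ᵥ v - matNeg (T * D) *ᵥ v :=
    fun v => by rw [Matrix.mulVec_mulVec, ← Matrix.sub_mulVec, matPos_sub_matNeg]
  have hBWs : ∀ v : Fin r → ℝ, B *ᵥ (W *ᵥ v) = matPos (B * W) *ᵥ v - matNeg (B * W) *ᵥ v :=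
    fun v => by rw [Matrix.mulVec_mulVec, ← Matrix.sub_mulVec, matPos_sub_matNeg]
  have hkeyU : ∀ k, T *ᵥ xhatU (k + 1) - T *ᵥ x (k + 1) =
      A *ᵥ (T *ᵥ xhatU k - T *ᵥ x k)
        + (matPos (T * D) *ᵥ (dU k - d k) + matNeg (T * D) *ᵥ (d k - dL k))
        + (matPos (B * W) *ᵥ (w k - wL k) + matNeg (B * W) *ᵥ (wU k - w k)) := by
    intro k
    rw [hobsU k, hsys k, hout k]
    simp only [Matrix.mulVec_add, Matrix.mulVec_sub, hcan, hTF, hTDs, hBWs]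
    abel
  have hkeyL : ∀ k, T *ᵥ x (k + 1) - T *ᵥ xhatL (k + 1) =
      A *ᵥ (T *ᵥ x k - T *ᵥ xhatL k)
        + (matPos (T * D) *ᵥ (d k - dL k) + matNeg (T * D) *ᵥ (dU k - d k))
        + (matPos (B * W) *ᵥ (wU k - w k) + matNeg (B * W) *ᵥ (w k - wL k)) := by
    intro k
    rw [hobsL k, hsys k, hout k]
    simp only [Matrix.mulVec_add, Matrix.mulVec_sub, hcan, hTF, hTDs, hBWs]
    abel
  intro k
  induction k with
  | zero => exact fun i => ⟨hU0 i, hL0 i⟩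
  | succ k ih =>
    intro i
    have hdUd : ∀ j, 0 ≤ (dU k - d k) j := fun j => sub_nonneg.2 (hd k j).2
    have hddL : ∀ j, 0 ≤ (d k - dL k) j := fun j => sub_nonneg.2 (hd k j).1
    have hwUw : ∀ j, 0 ≤ (wU k - w k) j := fun j => sub_nonneg.2 (hw k j).2
    have hwwL : ∀ j, 0 ≤ (w k - wL k) j := fun j => sub_nonneg.2 (hw k j).1
    constructor
    · rw [hkeyU k]
      simp only [Pi.add_apply]
      have h1 := mulVec_entry_nonneg A _ hA (fun j => (ih j).1) i
      have h2 := mulVec_entry_nonneg _ _ (matPos_nonneg (T * D)) hdUd i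
      have h3 := mulVec_entry_nonneg _ _ (matNeg_nonneg (T * D)) hddL i
      have h4 := mulVec_entry_nonneg _ _ (matPos_nonneg (B * W)) hwwL i
      have h5 := mulVec_entry_nonneg _ _ (matNeg_nonneg (B * W)) hwUw i
      linarith
    · rw [hkeyL k]
      simp only [Pi.add_apply]
      have h1 := mulVec_entry_nonneg A _ hA (fun j => (ih j).2) i
      have h2 := mulVec_entry_nonneg _ _ (matPos_nonneg (T * D)) hddL i
      have h3 := mulVec_entry_nonneg _ _ (matNeg_nonneg (T * D)) hdUd i
      have h4 := mulVec_entry_nonneg _ _ (matPos_nonneg (B * W)) hwUw i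
      have h5 := mulVec_entry_nonneg _ _ (matNeg_nonneg (B * W)) hwwL i
      linarith
end
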